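/- Let k be an algebraically closed field of characteristic 2 and let n ≥ 2. The subalgebra 𝔫 = ⁅𝔪,𝔪⁆ is a Lie ideal of sp(2n,k), and the quotient Lie algebra q := sp(2n,k)/𝔫 is a Heisenberg Lie algebra: it has dimension 2n + 1, its derived subalgebra ⁅q,q⁆ equals its center {x ∈ q : ⁅x,y⁆ = 0 for all y ∈ q}, and this center is one-dimensional. -/

import Mathlib

/-!
In characteristic 2 the elements of `sp(2n,k)` are the block matrices `[[A, B], [C, Aᵀ]]` with
`B`, `C` symmetric. The off-diagonal blocks of a commutator of two of them have zero diagonal,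
and if one factor already has alternating off-diagonal blocks, the commutator also has
`tr A = tr (B C') - tr (B' C) = 0`, since `tr (B C) = 0` for `B` alternating and `C` symmetric.
Explicit commutators of block matrices built from matrix units show that these conditions cut out
exactly `𝔪` and `𝔫`. Hence `x ↦ (diag B, diag C)` maps `sp(2n,k)` onto `k²ⁿ` with kernel `𝔪`, and
`x ↦ tr A` maps `𝔪` onto `k` with kernel `𝔫`. Finally, for `x ∈ sp(2n,k)` the traces of the
upper-left blocks of `⁅x, [[0, 0], [Eᵢᵢ, 0]]⁆` and `⁅x, [[0, Eᵢᵢ], [0, 0]]⁆` are `Bᵢᵢ` and `Cᵢᵢ`,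
so `x` is central modulo `𝔫` exactly when `x ∈ 𝔪`.
-/

open Matrix

noncomputable section

/-- The matrix of the standard symplectic form: `[[0, Iₙ], [−Iₙ, 0]]`. -/
def spJ (k : Type*) [Field k] (n : ℕ) :
    Matrix (Fin n ⊕ Fin n) (Fin n ⊕ Fin n) k :=
  Matrix.fromBlocks 0 1 (-1) 0

/-- The symplectic Lie algebra `sp(2n,k) = {x : xᵀJ + Jx = 0}`, as a subset of the
matrix Lie algebra (with bracket `⁅x,y⁆ = x*y - y*x`). -/
def spSet (k : Type*) [Field k] (n : ℕ) :
    Set (Matrix (Fin n ⊕ Fin n) (Fin n ⊕ Fin n) k) :=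
  {x | xᵀ * spJ k n + spJ k n * x = 0}

/-- The symplectic group `Sp(2n,k) = {g : gᵀJg = J}`. -/
def SpGroup (k : Type*) [Field k] (n : ℕ) :
    Set (Matrix (Fin n ⊕ Fin n) (Fin n ⊕ Fin n) k) :=
  {g | gᵀ * spJ k n * g = spJ k n}

/-- The derived subalgebra `𝔪 = ⁅sp(2n,k), sp(2n,k)⁆`, i.e. the span of all brackets of
pairs of elements of `sp(2n,k)`. -/
def spm (k : Type*) [Field k] (n : ℕ) :
    Submodule k (Matrix (Fin n ⊕ Fin n) (Fin n ⊕ Fin n) k) :=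
  Submodule.span k {m | ∃ x ∈ spSet k n, ∃ y ∈ spSet k n, m = x * y - y * x}

/-- The second derived subalgebra `𝔫 = ⁅𝔪, 𝔪⁆`. -/
def spn (k : Type*) [Field k] (n : ℕ) :
    Submodule k (Matrix (Fin n ⊕ Fin n) (Fin n ⊕ Fin n) k) :=
  Submodule.span k {m | ∃ x ∈ spm k n, ∃ y ∈ spm k n, m = x * y - y * x}

/-- The center `{x ∈ sp(2n,k) : ⁅x,y⁆ = 0 for all y ∈ sp(2n,k)}`. -/
def spCenter (k : Type*) [Field k] (n : ℕ) :
    Set (Matrix (Fin n ⊕ Fin n) (Fin n ⊕ Fin n) k) :=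
  {x ∈ spSet k n | ∀ y ∈ spSet k n, x * y - y * x = 0}

theorem CharTwo.neg_eq_of_module {R M : Type*} [Ring R] [CharP R 2] [AddCommGroup M]
    [Module R M] (x : M) : -x = x := by
  rw [← neg_one_smul R x, CharTwo.neg_eq, one_smul]

theorem Submodule.finrank_eq_finrank_inf_ker_add {K V W : Type*} [DivisionRing K]
    [AddCommGroup V] [Module K V] [FiniteDimensional K V] [AddCommGroup W] [Module K W]
    (p : Submodule K V) (f : V →ₗ[K] W) (hf : ∀ w, ∃ v ∈ p, f v = w) :
    Module.finrank K p = Module.finrank K ↥(p ⊓ LinearMap.ker f) + Module.finrank K W := by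
  have hrange : LinearMap.range (f.domRestrict p) = ⊤ :=
    eq_top_iff.2 fun w _ => let ⟨v, hv, hfv⟩ := hf w; ⟨⟨v, hv⟩, hfv⟩
  have hker : LinearMap.ker (f.domRestrict p) = comap p.subtype (p ⊓ LinearMap.ker f) := by
    rw [LinearMap.ker_domRestrict, comap_inf, comap_subtype_self, top_inf_eq]
  rw [← LinearMap.finrank_range_add_finrank_ker (f.domRestrict p), hrange, finrank_top, hker,
    (comapSubtypeEquivOfLe inf_le_left).finrank_eq, add_comm]

namespace Matrix

variable {ι R : Type*}

theorem exists_eq_add_transpose [LinearOrder ι] [AddCommMonoid R] {b : Matrix ι ι R}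
    (hb : b.IsSymm) (hd : b.diag = 0) : ∃ u, b = u + uᵀ := by
  refine ⟨of fun i j => if i < j then b i j else 0, ext fun i j => ?_⟩
  rcases lt_trichotomy i j with h | rfl | h
  · simp [h, h.not_gt]
  · simpa using congrFun hd i
  · simp [h, h.not_gt, hb.apply i j]

theorem map_mem_of_forall_single_mem [Fintype ι] [DecidableEq ι] [CommSemiring R] {M : Type*}
    [AddCommMonoid M] [Module R M] (f : Matrix ι ι R →ₗ[R] M) {p : Submodule R M}
    (h : ∀ i j, f (single i j 1) ∈ p) (a : Matrix ι ι R) : f a ∈ p := by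
  induction a using Matrix.induction_on' with
  | h_zero => simp
  | h_add a b ha hb => simpa using add_mem ha hb
  | h_std_basis i j x =>
    rw [show single i j x = x • single i j 1 by simp [smul_single], map_smul]
    exact p.smul_mem x (h i j)

theorem sub_single_trace_eq_sum_commutator [Fintype ι] [DecidableEq ι] [Ring R]
    (a : Matrix ι ι R) (i₀ : ι) :
    a - single i₀ i₀ a.trace =
      ∑ i, (single i i₀ 1 * (single i₀ i 1 * a) - single i₀ i 1 * a * single i i₀ 1) := by
  simp only [Finset.sum_sub_distrib, ← Matrix.mul_assoc, single_mul_single_same,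
    single_mul_mul_single, one_mul, mul_one, ← Finset.sum_mul, sum_single_one]
  congr 1
  exact map_sum (singleAddMonoidHom (α := R) i₀ i₀) _ _

theorem commutator_single_add_transpose [Fintype ι] [DecidableEq ι] [Ring R] [CharP R 2]
    (i j : ι) :
    single i i (1 : R) * (single i j 1 + single j i 1) -
        (single i j 1 + single j i 1) * single i i 1 = single i j 1 + single j i 1 := by
  rcases eq_or_ne i j with rfl | hij
  · simp [← single_add, CharTwo.add_self_eq_zero]
  · simp [Matrix.mul_add, Matrix.add_mul, hij, hij.symm, sub_eq_add_neg,
      CharTwo.neg_eq_of_module (R := R)]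

variable [CommRing R]

variable (ι R) in
@[simps]
def diagBlocks : Matrix ι ι R →ₗ[R] Matrix (ι ⊕ ι) (ι ⊕ ι) R where
  toFun a := fromBlocks a 0 0 aᵀ
  map_add' a b := by simp [fromBlocks_add]
  map_smul' c a := by simp [fromBlocks_smul]

variable (ι R) in
@[simps]
def upperBlock : Matrix ι ι R →ₗ[R] Matrix (ι ⊕ ι) (ι ⊕ ι) R where
  toFun b := fromBlocks 0 b 0 0
  map_add' a b := by simp [fromBlocks_add]
  map_smul' c a := by simp [fromBlocks_smul]

variable (ι R) in
@[simps]
def lowerBlock : Matrix ι ι R →ₗ[R] Matrix (ι ⊕ ι) (ι ⊕ ι) R where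
  toFun c := fromBlocks 0 0 c 0
  map_add' a b := by simp [fromBlocks_add]
  map_smul' c a := by simp [fromBlocks_smul]

variable (ι R) in
@[simps]
def offDiagBlocksDiag : Matrix (ι ⊕ ι) (ι ⊕ ι) R →ₗ[R] (ι → R) × (ι → R) where
  toFun x := (x.toBlocks₁₂.diag, x.toBlocks₂₁.diag)
  map_add' _ _ := rfl
  map_smul' _ _ := rfl

theorem fromBlocks_eq_diagBlocks_add (A B C : Matrix ι ι R) :
    fromBlocks A B C Aᵀ = diagBlocks ι R A + upperBlock ι R B + lowerBlock ι R C := by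
  simp [fromBlocks_add]

variable [Fintype ι]

variable (ι R) in
@[simps]
def traceBlock₁₁ : Matrix (ι ⊕ ι) (ι ⊕ ι) R →ₗ[R] R where
  toFun x := x.toBlocks₁₁.trace
  map_add' x y := trace_add x.toBlocks₁₁ y.toBlocks₁₁
  map_smul' c x := trace_smul c x.toBlocks₁₁

theorem diag_mul_sub_mul_transpose (A : Matrix ι ι R) {S : Matrix ι ι R} (hS : S.IsSymm) :
    (A * S - S * Aᵀ).diag = 0 := by
  rw [← hS.eq, ← transpose_mul, hS.eq, diag_sub, diag_transpose, sub_self]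

theorem trace_mul_eq_zero_of_diag_eq_zero [CharP R 2] {b c : Matrix ι ι R} (hb : b.IsSymm)
    (hd : b.diag = 0) (hc : c.IsSymm) : (b * c).trace = 0 := by
  let : LinearOrder ι := LinearOrder.lift' _ (Fintype.equivFin ι).injective
  obtain ⟨u, rfl⟩ := exists_eq_add_transpose hb hd
  have : (uᵀ * c).trace = (u * c).trace := by
    rw [← trace_transpose, transpose_mul, transpose_transpose, hc.eq, trace_mul_comm]
  rw [add_mul, trace_add, this, CharTwo.add_self_eq_zero]

theorem fromBlocks_commutator (A B C A' B' C' : Matrix ι ι R) :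
    fromBlocks A B C Aᵀ * fromBlocks A' B' C' A'ᵀ - fromBlocks A' B' C' A'ᵀ * fromBlocks A B C Aᵀ
      = fromBlocks (A * A' - A' * A + (B * C' - B' * C)) (A * B' - B' * Aᵀ - (A' * B - B * A'ᵀ))
          (Aᵀ * C' - C' * A - (A'ᵀ * C - C * A')) (Aᵀ * A'ᵀ - A'ᵀ * Aᵀ + (C * B' - C' * B)) := by
  rw [fromBlocks_multiply, fromBlocks_multiply, sub_eq_add_neg, fromBlocks_neg, fromBlocks_add]
  congr 1 <;> abel

theorem diagBlocks_commutator_upperBlock (a b : Matrix ι ι R) :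
    diagBlocks ι R a * upperBlock ι R b - upperBlock ι R b * diagBlocks ι R a
      = upperBlock ι R (a * b - b * aᵀ) := by
  simp [fromBlocks_multiply, fromBlocks_add, sub_eq_add_neg, fromBlocks_neg]

theorem diagBlocks_commutator_lowerBlock (a c : Matrix ι ι R) :
    diagBlocks ι R a * lowerBlock ι R c - lowerBlock ι R c * diagBlocks ι R a
      = lowerBlock ι R (aᵀ * c - c * a) := by
  simp [fromBlocks_multiply, fromBlocks_add, sub_eq_add_neg, fromBlocks_neg]

variable [CharP R 2]

theorem diagBlocks_commutator (a b : Matrix ι ι R) :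
    diagBlocks ι R a * diagBlocks ι R b - diagBlocks ι R b * diagBlocks ι R a
      = diagBlocks ι R (a * b - b * a) := by
  simp only [diagBlocks_apply, fromBlocks_commutator]
  simp [transpose_sub, transpose_mul, ← neg_sub (bᵀ * aᵀ), CharTwo.neg_eq_of_module (R := R)]

theorem upperBlock_commutator_lowerBlock {b c : Matrix ι ι R} (hb : b.IsSymm) (hc : c.IsSymm) :
    upperBlock ι R b * lowerBlock ι R c - lowerBlock ι R c * upperBlock ι R b
      = diagBlocks ι R (b * c) := by
  simp [fromBlocks_multiply, fromBlocks_add, sub_eq_add_neg, transpose_mul, hb.eq, hc.eq,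
    CharTwo.neg_eq_of_module (R := R)]

theorem diagBlocks_sub_single_trace_mem_span [DecidableEq ι]
    {S : Set (Matrix (ι ⊕ ι) (ι ⊕ ι) R)} (hS : ∀ a, diagBlocks ι R a ∈ S) (a : Matrix ι ι R)
    (i₀ : ι) : diagBlocks ι R (a - single i₀ i₀ a.trace) ∈
      Submodule.span R {m | ∃ x ∈ S, ∃ y ∈ S, m = x * y - y * x} := by
  rw [sub_single_trace_eq_sum_commutator, map_sum]
  refine Submodule.sum_mem _ fun i _ => Submodule.subset_span
    ⟨_, hS (single i i₀ 1), _, hS (single i₀ i 1 * a), ?_⟩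
  rw [diagBlocks_commutator]

end Matrix

section Symplectic

variable {k : Type*} [Field k] {n : ℕ}

variable (k n) in
def spSubmodule : Submodule k (Matrix (Fin n ⊕ Fin n) (Fin n ⊕ Fin n) k) where
  carrier := spSet k n
  add_mem' {x y} hx hy := by
    simp only [spSet, Set.mem_ofPred_eq, transpose_add, Matrix.add_mul, Matrix.mul_add] at *
    rw [add_add_add_comm, hx, hy, add_zero]
  zero_mem' := by simp [spSet]
  smul_mem' c x hx := by
    simp only [spSet, Set.mem_ofPred_eq, transpose_smul, Matrix.smul_mul, Matrix.mul_smul] at *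
    rw [← smul_add, hx, smul_zero]

theorem commutator_mem_spSet {x y : Matrix (Fin n ⊕ Fin n) (Fin n ⊕ Fin n) k}
    (hx : x ∈ spSet k n) (hy : y ∈ spSet k n) : x * y - y * x ∈ spSet k n := by
  have hx' : xᵀ * spJ k n = -(spJ k n * x) := eq_neg_of_add_eq_zero_left hx
  have hy' : yᵀ * spJ k n = -(spJ k n * y) := eq_neg_of_add_eq_zero_left hy
  show (x * y - y * x)ᵀ * spJ k n + spJ k n * (x * y - y * x) = 0
  rw [transpose_sub, transpose_mul, transpose_mul, Matrix.sub_mul, Matrix.mul_assoc, hx',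
    Matrix.mul_assoc xᵀ, hy', Matrix.mul_neg, Matrix.mul_neg, ← Matrix.mul_assoc, hy',
    ← Matrix.mul_assoc, hx']
  noncomm_ring

theorem fromBlocks_mem_spSet_iff {A B C D : Matrix (Fin n) (Fin n) k} :
    fromBlocks A B C D ∈ spSet k n ↔ B.IsSymm ∧ C.IsSymm ∧ D = -Aᵀ := by
  simp only [spSet, spJ, Set.mem_ofPred_eq, fromBlocks_transpose, fromBlocks_multiply,
    fromBlocks_add, ← fromBlocks_zero, fromBlocks_inj]
  simp only [Matrix.neg_mul, Matrix.mul_neg, Matrix.one_mul, Matrix.mul_one, Matrix.zero_mul,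
    Matrix.mul_zero, zero_add, add_zero]
  constructor
  · rintro ⟨hC, hD, -, hB⟩
    exact ⟨add_neg_eq_zero.mp hB, neg_add_eq_zero.mp hC, eq_neg_of_add_eq_zero_right hD⟩
  · rintro ⟨hB, hC, rfl⟩
    simp [hB.eq, hC.eq]

theorem commutator_mem_spm {x y : Matrix (Fin n ⊕ Fin n) (Fin n ⊕ Fin n) k}
    (hx : x ∈ spSet k n) (hy : y ∈ spSet k n) : x * y - y * x ∈ spm k n :=
  Submodule.subset_span ⟨x, hx, y, hy, rfl⟩

theorem commutator_mem_spn {x y : Matrix (Fin n ⊕ Fin n) (Fin n ⊕ Fin n) k}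
    (hx : x ∈ spm k n) (hy : y ∈ spm k n) : x * y - y * x ∈ spn k n :=
  Submodule.subset_span ⟨x, hx, y, hy, rfl⟩

variable [CharP k 2]

theorem fromBlocks_mem_spSet {A B C : Matrix (Fin n) (Fin n) k} (hB : B.IsSymm) (hC : C.IsSymm) :
    fromBlocks A B C Aᵀ ∈ spSet k n :=
  fromBlocks_mem_spSet_iff.mpr ⟨hB, hC, (CharTwo.neg_eq_of_module (R := k) _).symm⟩

theorem exists_fromBlocks_of_mem_spSet {x : Matrix (Fin n ⊕ Fin n) (Fin n ⊕ Fin n) k}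
    (hx : x ∈ spSet k n) : ∃ A B C, B.IsSymm ∧ C.IsSymm ∧ x = fromBlocks A B C Aᵀ := by
  rw [← fromBlocks_toBlocks x, fromBlocks_mem_spSet_iff, CharTwo.neg_eq_of_module (R := k)] at hx
  exact ⟨_, _, _, hx.1, hx.2.1, by rw [← hx.2.2, fromBlocks_toBlocks]⟩

theorem diagBlocks_mem_spSet (a : Matrix (Fin n) (Fin n) k) : diagBlocks (Fin n) k a ∈ spSet k n :=
  fromBlocks_mem_spSet isSymm_zero isSymm_zero

theorem upperBlock_mem_spSet {b : Matrix (Fin n) (Fin n) k} (hb : b.IsSymm) :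
    upperBlock (Fin n) k b ∈ spSet k n := by
  simpa using fromBlocks_mem_spSet (A := 0) hb isSymm_zero

theorem lowerBlock_mem_spSet {c : Matrix (Fin n) (Fin n) k} (hc : c.IsSymm) :
    lowerBlock (Fin n) k c ∈ spSet k n := by
  simpa using fromBlocks_mem_spSet (A := 0) isSymm_zero hc

theorem diagBlocks_mem_spm_of_isSymm {a : Matrix (Fin n) (Fin n) k} (ha : a.IsSymm) :
    diagBlocks (Fin n) k a ∈ spm k n := by
  have := commutator_mem_spm (upperBlock_mem_spSet isSymm_one) (lowerBlock_mem_spSet ha)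
  rwa [upperBlock_commutator_lowerBlock isSymm_one ha, Matrix.one_mul] at this

theorem diagBlocks_mem_spm [NeZero n] (a : Matrix (Fin n) (Fin n) k) :
    diagBlocks (Fin n) k a ∈ spm k n := by
  rw [← sub_add_cancel a (single 0 0 a.trace), map_add]
  exact add_mem (diagBlocks_sub_single_trace_mem_span diagBlocks_mem_spSet a 0)
    (diagBlocks_mem_spm_of_isSymm (transpose_single 0 0 _))

theorem upperBlock_add_transpose_mem_spm (u : Matrix (Fin n) (Fin n) k) :
    upperBlock (Fin n) k (u + uᵀ) ∈ spm k n := by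
  have := commutator_mem_spm (diagBlocks_mem_spSet u) (upperBlock_mem_spSet isSymm_one)
  rwa [diagBlocks_commutator_upperBlock, Matrix.mul_one, Matrix.one_mul, sub_eq_add_neg,
    CharTwo.neg_eq_of_module (R := k)] at this

theorem lowerBlock_add_transpose_mem_spm (u : Matrix (Fin n) (Fin n) k) :
    lowerBlock (Fin n) k (u + uᵀ) ∈ spm k n := by
  have := commutator_mem_spm (diagBlocks_mem_spSet uᵀ) (lowerBlock_mem_spSet isSymm_one)
  rwa [diagBlocks_commutator_lowerBlock, Matrix.mul_one, Matrix.one_mul, transpose_transpose,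
    sub_eq_add_neg, CharTwo.neg_eq_of_module (R := k)] at this

theorem spm_le_inf_ker :
    spm k n ≤ spSubmodule k n ⊓ LinearMap.ker (offDiagBlocksDiag (Fin n) k) := by
  refine Submodule.span_le.mpr ?_
  rintro _ ⟨x, hx, y, hy, rfl⟩
  refine ⟨commutator_mem_spSet hx hy, ?_⟩
  obtain ⟨A, B, C, hB, hC, rfl⟩ := exists_fromBlocks_of_mem_spSet hx
  obtain ⟨A', B', C', hB', hC', rfl⟩ := exists_fromBlocks_of_mem_spSet hy
  have h₂₁ := diag_mul_sub_mul_transpose Aᵀ hC'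
  have h₂₁' := diag_mul_sub_mul_transpose A'ᵀ hC
  rw [transpose_transpose] at h₂₁ h₂₁'
  rw [SetLike.mem_coe, LinearMap.mem_ker, fromBlocks_commutator, offDiagBlocksDiag_apply,
    toBlocks_fromBlocks₁₂, toBlocks_fromBlocks₂₁, diag_sub (A * B' - B' * Aᵀ),
    diag_sub (Aᵀ * C' - C' * A), diag_mul_sub_mul_transpose A hB',
    diag_mul_sub_mul_transpose A' hB, h₂₁, h₂₁', sub_zero, Prod.mk_zero_zero]

theorem mem_spSet_of_mem_spm {x : Matrix (Fin n ⊕ Fin n) (Fin n ⊕ Fin n) k} (hx : x ∈ spm k n) :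
    x ∈ spSet k n :=
  (spm_le_inf_ker hx).1

theorem inf_ker_le_spm [NeZero n] :
    spSubmodule k n ⊓ LinearMap.ker (offDiagBlocksDiag (Fin n) k) ≤ spm k n := by
  rintro _ ⟨hx, hker⟩
  obtain ⟨A, B, C, hB, hC, rfl⟩ := exists_fromBlocks_of_mem_spSet hx
  simp only [SetLike.mem_coe, LinearMap.mem_ker, offDiagBlocksDiag_apply, toBlocks_fromBlocks₁₂,
    toBlocks_fromBlocks₂₁, Prod.mk_eq_zero] at hker
  obtain ⟨u, rfl⟩ := exists_eq_add_transpose hB hker.1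
  obtain ⟨v, rfl⟩ := exists_eq_add_transpose hC hker.2
  rw [fromBlocks_eq_diagBlocks_add]
  exact add_mem (add_mem (diagBlocks_mem_spm A) (upperBlock_add_transpose_mem_spm u))
    (lowerBlock_add_transpose_mem_spm v)

theorem spm_eq [NeZero n] :
    spm k n = spSubmodule k n ⊓ LinearMap.ker (offDiagBlocksDiag (Fin n) k) :=
  le_antisymm spm_le_inf_ker inf_ker_le_spm

theorem traceBlock₁₁_commutator {x y : Matrix (Fin n ⊕ Fin n) (Fin n ⊕ Fin n) k}
    (hx : x ∈ spm k n) (hy : y ∈ spSet k n) : traceBlock₁₁ (Fin n) k (x * y - y * x) = 0 := by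
  obtain ⟨hxsp, hker⟩ := spm_le_inf_ker hx
  obtain ⟨A, B, C, hB, hC, rfl⟩ := exists_fromBlocks_of_mem_spSet hxsp
  obtain ⟨A', B', C', hB', hC', rfl⟩ := exists_fromBlocks_of_mem_spSet hy
  simp only [SetLike.mem_coe, LinearMap.mem_ker, offDiagBlocksDiag_apply, toBlocks_fromBlocks₁₂,
    toBlocks_fromBlocks₂₁, Prod.mk_eq_zero] at hker
  rw [fromBlocks_commutator, traceBlock₁₁_apply, toBlocks_fromBlocks₁₁, trace_add, trace_sub,
    trace_sub, trace_mul_comm A' A, trace_mul_comm B' C, sub_self, zero_add,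
    trace_mul_eq_zero_of_diag_eq_zero hB hker.1 hC',
    trace_mul_eq_zero_of_diag_eq_zero hC hker.2 hB', sub_zero]

theorem spn_le_inf_ker : spn k n ≤ spm k n ⊓ LinearMap.ker (traceBlock₁₁ (Fin n) k) := by
  refine Submodule.span_le.mpr ?_
  rintro _ ⟨x, hx, y, hy, rfl⟩
  exact ⟨commutator_mem_spm (mem_spSet_of_mem_spm hx) (mem_spSet_of_mem_spm hy),
    traceBlock₁₁_commutator hx (mem_spSet_of_mem_spm hy)⟩

theorem spn_le_spm : spn k n ≤ spm k n :=
  spn_le_inf_ker.trans inf_le_left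

theorem upperBlock_add_transpose_mem_spn [NeZero n] (u : Matrix (Fin n) (Fin n) k) :
    upperBlock (Fin n) k (u + uᵀ) ∈ spn k n := by
  refine map_mem_of_forall_single_mem (upperBlock (Fin n) k ∘ₗ
    (LinearMap.id + (transposeLinearEquiv (Fin n) (Fin n) k k).toLinearMap)) (fun i j => ?_) u
  have := commutator_mem_spn (diagBlocks_mem_spm (single i i (1 : k)))
    (upperBlock_add_transpose_mem_spm (single i j 1))
  rw [diagBlocks_commutator_upperBlock] at this
  simp only [transpose_single, commutator_single_add_transpose] at this
  simpa [transpose_single] using this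

theorem lowerBlock_add_transpose_mem_spn [NeZero n] (u : Matrix (Fin n) (Fin n) k) :
    lowerBlock (Fin n) k (u + uᵀ) ∈ spn k n := by
  refine map_mem_of_forall_single_mem (lowerBlock (Fin n) k ∘ₗ
    (LinearMap.id + (transposeLinearEquiv (Fin n) (Fin n) k k).toLinearMap)) (fun i j => ?_) u
  have := commutator_mem_spn (diagBlocks_mem_spm (single i i (1 : k)))
    (lowerBlock_add_transpose_mem_spm (single i j 1))
  rw [diagBlocks_commutator_lowerBlock] at this
  simp only [transpose_single, commutator_single_add_transpose] at this
  simpa [transpose_single] using this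

theorem inf_ker_le_spn [NeZero n] :
    spm k n ⊓ LinearMap.ker (traceBlock₁₁ (Fin n) k) ≤ spn k n := by
  rintro _ ⟨hxm, htr⟩
  obtain ⟨hx, hker⟩ := spm_le_inf_ker hxm
  obtain ⟨A, B, C, hB, hC, rfl⟩ := exists_fromBlocks_of_mem_spSet hx
  simp only [SetLike.mem_coe, LinearMap.mem_ker, offDiagBlocksDiag_apply, toBlocks_fromBlocks₁₂,
    toBlocks_fromBlocks₂₁, Prod.mk_eq_zero] at hker
  rw [SetLike.mem_coe, LinearMap.mem_ker, traceBlock₁₁_apply, toBlocks_fromBlocks₁₁] at htr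
  obtain ⟨u, rfl⟩ := exists_eq_add_transpose hB hker.1
  obtain ⟨v, rfl⟩ := exists_eq_add_transpose hC hker.2
  rw [fromBlocks_eq_diagBlocks_add]
  refine add_mem (add_mem ?_ (upperBlock_add_transpose_mem_spn u))
    (lowerBlock_add_transpose_mem_spn v)
  rw [← sub_zero A, ← single_zero 0 0, ← htr]
  exact diagBlocks_sub_single_trace_mem_span diagBlocks_mem_spm A 0

theorem spn_eq [NeZero n] : spn k n = spm k n ⊓ LinearMap.ker (traceBlock₁₁ (Fin n) k) :=
  le_antisymm spn_le_inf_ker inf_ker_le_spn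

theorem commutator_mem_spn_of_mem_spm [NeZero n] {x y : Matrix (Fin n ⊕ Fin n) (Fin n ⊕ Fin n) k}
    (hx : x ∈ spm k n) (hy : y ∈ spSet k n) : x * y - y * x ∈ spn k n :=
  inf_ker_le_spn ⟨commutator_mem_spm (mem_spSet_of_mem_spm hx) hy, traceBlock₁₁_commutator hx hy⟩

theorem mem_spm_iff_forall_commutator_mem_spn [NeZero n]
    {x : Matrix (Fin n ⊕ Fin n) (Fin n ⊕ Fin n) k} (hx : x ∈ spSet k n) :
    x ∈ spm k n ↔ ∀ y ∈ spSet k n, x * y - y * x ∈ spn k n := by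
  refine ⟨fun hxm y hy => commutator_mem_spn_of_mem_spm hxm hy,
    fun h => inf_ker_le_spm ⟨hx, ?_⟩⟩
  have htr : ∀ y ∈ spSet k n, traceBlock₁₁ (Fin n) k (x * y - y * x) = 0 :=
    fun y hy => (spn_le_inf_ker (h y hy)).2
  obtain ⟨A, B, C, hB, hC, rfl⟩ := exists_fromBlocks_of_mem_spSet hx
  have hBd : B.diag = 0 := funext fun i => by
    simpa [fromBlocks_multiply, sub_eq_add_neg, fromBlocks_neg, fromBlocks_add, trace_mul_single]
      using htr _ (lowerBlock_mem_spSet (transpose_single i i (1 : k)))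
  have hCd : C.diag = 0 := funext fun i => by
    simpa [fromBlocks_multiply, sub_eq_add_neg, fromBlocks_neg, fromBlocks_add, trace_single_mul]
      using htr _ (upperBlock_mem_spSet (transpose_single i i (1 : k)))
  simp [hBd, hCd]

theorem finrank_spSubmodule [NeZero n] :
    Module.finrank k (spSubmodule k n) = Module.finrank k (spm k n) + 2 * n := by
  rw [Submodule.finrank_eq_finrank_inf_ker_add _ (offDiagBlocksDiag (Fin n) k), ← spm_eq,
    Module.finrank_prod, Module.finrank_fin_fun, two_mul]
  rintro ⟨u, v⟩
  exact ⟨fromBlocks 0 (diagonal u) (diagonal v) 0ᵀ,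
    fromBlocks_mem_spSet (isSymm_diagonal u) (isSymm_diagonal v), by simp⟩

theorem finrank_spm [NeZero n] : Module.finrank k (spm k n) = Module.finrank k (spn k n) + 1 := by
  rw [Submodule.finrank_eq_finrank_inf_ker_add _ (traceBlock₁₁ (Fin n) k), ← spn_eq,
    Module.finrank_self]
  exact fun t => ⟨diagBlocks (Fin n) k (single 0 0 t), diagBlocks_mem_spm _, by simp⟩

end Symplectic

/-- The quotient `q = sp(2n,k)/𝔫` is described through preimages in `sp(2n,k)`: for
`x ∈ sp(2n,k)`, the image of `x` lies in `⁅q,q⁆` iff `x ∈ 𝔪 + 𝔫`, and it is central in `q` iff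
all brackets `⁅x,y⁆` with `y ∈ sp(2n,k)` lie in `𝔫`. -/
theorem stmt14_general (k : Type*) [Field k] [CharP k 2] (n : ℕ) (hn : 2 ≤ n) :
    (∀ x ∈ spSet k n, ∀ y ∈ spn k n, x * y - y * x ∈ spn k n) ∧
    (∃ S : Submodule k (Matrix (Fin n ⊕ Fin n) (Fin n ⊕ Fin n) k),
      (S : Set (Matrix (Fin n ⊕ Fin n) (Fin n ⊕ Fin n) k)) = spSet k n ∧
      Module.finrank k S = Module.finrank k (spn k n) + (2 * n + 1)) ∧
    (∀ x ∈ spSet k n,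
      (x ∈ spm k n ⊔ spn k n ↔ ∀ y ∈ spSet k n, x * y - y * x ∈ spn k n)) ∧
    Module.finrank k ↥(spm k n ⊔ spn k n) = Module.finrank k (spn k n) + 1 := by
  have : NeZero n := ⟨by omega⟩
  rw [sup_eq_left.mpr spn_le_spm]
  refine ⟨fun x hx y hy => ?_, ⟨spSubmodule k n, rfl, ?_⟩,
    fun x hx => mem_spm_iff_forall_commutator_mem_spn hx, finrank_spm⟩
  · rw [← neg_sub]
    exact neg_mem (commutator_mem_spn_of_mem_spm (spn_le_spm hy) hx)
  · rw [finrank_spSubmodule, finrank_spm]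
    ring

/-- Let `k` be algebraically closed of characteristic 2 and `n ≥ 2`. Then `𝔫 = ⁅𝔪,𝔪⁆`
is a Lie ideal of `sp(2n,k)`, and the quotient `q = sp(2n,k)/𝔫` is a Heisenberg Lie
algebra: `q` has dimension `2n + 1`; the derived subalgebra `⁅q,q⁆` equals the center of
`q` (expressed here via preimages in `sp(2n,k)`: for `x ∈ sp(2n,k)`, the image of `x`
lies in `⁅q,q⁆` iff `x ∈ 𝔪 + 𝔫`, and it is central in `q` iff all brackets `⁅x,y⁆` with
`y ∈ sp(2n,k)` lie in `𝔫`); and this center is one-dimensional. -/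
theorem stmt14 (k : Type*) [Field k] [IsAlgClosed k] [CharP k 2] (n : ℕ) (hn : 2 ≤ n) :
    (∀ x ∈ spSet k n, ∀ y ∈ spn k n, x * y - y * x ∈ spn k n) ∧
    (∃ S : Submodule k (Matrix (Fin n ⊕ Fin n) (Fin n ⊕ Fin n) k),
      (S : Set (Matrix (Fin n ⊕ Fin n) (Fin n ⊕ Fin n) k)) = spSet k n ∧
      Module.finrank k S = Module.finrank k (spn k n) + (2 * n + 1)) ∧
    (∀ x ∈ spSet k n,
      (x ∈ spm k n ⊔ spn k n ↔ ∀ y ∈ spSet k n, x * y - y * x ∈ spn k n)) ∧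
    Module.finrank k ↥(spm k n ⊔ spn k n) = Module.finrank k (spn k n) + 1 :=
  stmt14_general k n hn
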